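/- arXiv:1907.06055 — 4 statements merged into one kernel-verified Lean document; each statement's English description precedes it below -/
import Mathlib

section
/- There exists a constant C > 0 such that for all real numbers a ≥ 1 and R ≥ 1, one has | ∑_{n ∈ ℤ², |n| ≤ R} 1/(a + |n|²) − π·log(1 + R²/a) | ≤ (C/√a)·min(1, R/√a). -/
/-!
Sort the lattice points by `k = |n|²` and sum by parts: with `N(k)` the number of lattice points
in the disc `|n|² ≤ k` and `M = ⌊R²⌋`, the lattice sum is
`N(M) / (a + M) + ∑_{k < M} N(k) (1/(a + k) - 1/(a + k + 1))`.
Counting by columns and comparing with the area of the disc gives `|N(k) - π k| ≤ 4 √k + 1`.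
Replacing `N(k)` by `π k` turns the sum into `π ∑_{k < M} 1/(a + k + 1)`, which is
`π log (1 + M/a)` up to `π/a`. The remaining error is dominated by
`∑_{k < M} √k (1/(a + k) - 1/(a + k + 1))`, which is at most `√M / a ≤ R / a` and, telescoping
against `1/√(a + k)`, at most `2 / √a`.
-/

open scoped Real
open Finset

theorem Finset.sum_comp_eq_sum_card_filter_le_nsmul {ι M : Type*} [AddCommGroup M]
    (s : Finset ι) (h : ι → ℕ) (φ : ℕ → M) {N : ℕ} (hN : ∀ x ∈ s, h x ≤ N) :
    ∑ x ∈ s, φ (h x) = #s • φ N + ∑ k ∈ range N, #{x ∈ s | h x ≤ k} • (φ k - φ (k + 1)) := by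
  have telescope : ∀ x ∈ s,
      φ (h x) = φ N + ∑ k ∈ range N, if h x ≤ k then φ k - φ (k + 1) else 0 := by
    intro x hx
    have hIco : {k ∈ range N | h x ≤ k} = Ico (h x) N := by
      ext k; simp only [mem_filter, mem_range, mem_Ico]; omega
    have := sum_Ico_sub (fun k => -φ k) (hN x hx)
    simp only [neg_sub_neg] at this
    rw [← sum_filter, hIco, this]; abel
  rw [sum_congr rfl telescope, sum_add_distrib, sum_const, sum_comm]
  congr 1
  refine sum_congr rfl fun k _ => ?_
  rw [← sum_filter, sum_const]

theorem mul_add_sum_range_mul_sub_eq_sum_range_succ (φ : ℕ → ℝ) (M : ℕ) :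
    M * φ M + ∑ k ∈ range M, k * (φ k - φ (k + 1)) = ∑ k ∈ range M, φ (k + 1) := by
  induction M with
  | zero => simp
  | succ M ih => rw [sum_range_succ, sum_range_succ, ← ih]; push_cast; ring

theorem sum_Icc_neg_add_eq_two_nsmul_sum_range {M : Type*} [AddCommMonoid M] (g : ℤ → M)
    (hg : ∀ j, g (-j) = g j) (s : ℕ) :
    ∑ j ∈ Icc (-(s : ℤ)) s, g j + g 0 = 2 • ∑ i ∈ range (s + 1), g i := by
  induction s with
  | zero => simp [two_nsmul]
  | succ s ih =>
    have hIcc : Icc (-((s + 1 : ℕ) : ℤ)) (s + 1 : ℕ) =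
        insert (-(s + 1 : ℤ)) (insert ((s : ℤ) + 1) (Icc (-(s : ℤ)) s)) := by
      ext j; simp only [mem_Icc, mem_insert]; omega
    rw [hIcc, sum_insert (by simp; omega), sum_insert (by simp), add_assoc, add_assoc, ih,
      sum_range_succ _ (s + 1), nsmul_add, hg, two_nsmul (g _)]
    push_cast
    abel

theorem AntitoneOn.sum_range_sub_integral_mem_Icc {f : ℝ → ℝ} {n : ℕ}
    (hf : AntitoneOn f (Set.Icc 0 n)) :
    ∑ i ∈ range n, f i - ∫ x in 0..n, f x ∈ Set.Icc 0 (f 0 - f n) := by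
  rw [← zero_add (n : ℝ)] at hf
  have lower := hf.integral_le_sum
  have upper := hf.sum_le_integral
  have shift := (sum_range_succ' (fun i : ℕ => f i) n).symm.trans (sum_range_succ _ n)
  simp only [zero_add, Nat.cast_zero, Nat.cast_add, Nat.cast_one] at lower upper shift
  constructor <;> linarith

theorem integral_sqrt_sq_sub_sq {r : ℝ} (hr : 0 ≤ r) :
    ∫ x in 0..r, √(r ^ 2 - x ^ 2) = π * r ^ 2 / 4 :=
  calc ∫ x in 0..r, √(r ^ 2 - x ^ 2)
    _ = ∫ x in r * Real.sin 0..r * Real.sin (π / 2), √(r ^ 2 - x ^ 2) := by simp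
    _ = ∫ t in 0..π / 2, √(r ^ 2 - (r * Real.sin t) ^ 2) * (r * Real.cos t) :=
      (intervalIntegral.integral_comp_mul_deriv (fun t _ => (Real.hasDerivAt_sin t).const_mul r)
        (by fun_prop) (by fun_prop)).symm
    _ = ∫ t in 0..π / 2, r ^ 2 * Real.cos t ^ 2 := by
      refine intervalIntegral.integral_congr fun t ht => ?_
      rw [Set.uIcc_of_le (by positivity)] at ht
      have hcos : 0 ≤ Real.cos t :=
        Real.cos_nonneg_of_mem_Icc ⟨by linarith [ht.1, Real.pi_pos], ht.2⟩
      have : r ^ 2 - (r * Real.sin t) ^ 2 = (r * Real.cos t) ^ 2 := by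
        rw [mul_pow, mul_pow, Real.cos_sq']; ring
      rw [this, Real.sqrt_sq (mul_nonneg hr hcos)]; ring
    _ = π * r ^ 2 / 4 := by simp; ring

/-- `√` vanishes on negative arguments, so the integrand is zero beyond `r`. -/
theorem integral_sqrt_sq_sub_sq_of_le {r b : ℝ} (hr : 0 ≤ r) (hrb : r ≤ b) :
    ∫ x in 0..b, √(r ^ 2 - x ^ 2) = π * r ^ 2 / 4 := by
  have hcont : Continuous fun x : ℝ => √(r ^ 2 - x ^ 2) := by fun_prop
  have hout : ∫ x in r..b, √(r ^ 2 - x ^ 2) = 0 := by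
    rw [intervalIntegral.integral_congr (g := fun _ => 0), intervalIntegral.integral_zero]
    intro x hx
    rw [Set.uIcc_of_le hrb] at hx
    simp only [Real.sqrt_eq_zero']
    nlinarith [hx.1]
  rw [← intervalIntegral.integral_add_adjacent_intervals (b := r) (hcont.intervalIntegrable _ _)
    (hcont.intervalIntegrable _ _), integral_sqrt_sq_sub_sq hr, hout, add_zero]

theorem abs_two_mul_sqrt_add_one_sub_le (m : ℕ) : |((2 * m.sqrt + 1 : ℕ) : ℝ) - 2 * √m| ≤ 1 := by
  have := Real.nat_sqrt_le_real_sqrt (a := m)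
  have := Real.real_sqrt_lt_nat_sqrt_succ (a := m)
  push_cast
  rw [abs_le]; constructor <;> linarith

theorem sqrt_mul_inv_sub_inv_add_one_le {x : ℝ} (hx : 0 < x) :
    √x * (x⁻¹ - (x + 1)⁻¹) ≤ 2 * ((√x)⁻¹ - (√(x + 1))⁻¹) := by
  set u := √x
  set v := √(x + 1)
  have hu : 0 < u := Real.sqrt_pos.mpr hx
  have huv : u ≤ v := Real.sqrt_le_sqrt (by linarith)
  have hv : 0 < v := hu.trans_le huv
  have hu2 : u ^ 2 = x := Real.sq_sqrt hx.le
  have hv2 : v ^ 2 = x + 1 := Real.sq_sqrt (by linarith)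
  rw [← hv2, ← hu2]
  field_simp
  nlinarith [mul_pos hu hv, mul_pos (mul_pos hu hv) hv]

theorem inv_le_min_inv_sqrt_div {a R : ℝ} (ha : 1 ≤ a) (hR : 1 ≤ R) :
    a⁻¹ ≤ min (√a)⁻¹ (R / a) := by
  refine le_min (inv_anti₀ (Real.sqrt_pos.mpr (by linarith)) ?_) ?_
  · rw [Real.sqrt_le_left (by linarith)]; nlinarith
  · rw [← one_div]; gcongr

theorem sqrt_div_add_le_min {a x R : ℝ} (ha : 0 < a) (hx : 0 ≤ x) (hxR : √x ≤ R) :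
    √x / (a + x) ≤ min (√a)⁻¹ (R / a) := by
  have hsa : 0 < √a := Real.sqrt_pos.mpr ha
  refine le_min ?_ (by gcongr <;> linarith [Real.sqrt_nonneg x])
  rw [div_le_iff₀ (by positivity), ← div_eq_inv_mul, le_div_iff₀ hsa]
  nlinarith [Real.sq_sqrt ha.le, Real.sq_sqrt hx, sq_nonneg (√a - √x), Real.sqrt_nonneg x]

theorem div_sqrt_mul_min_one_div_sqrt {a : ℝ} (ha : 0 ≤ a) (C R : ℝ) :
    C / √a * min 1 (R / √a) = C * min (√a)⁻¹ (R / a) := by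
  rw [div_eq_mul_inv C, mul_assoc, mul_min_of_nonneg _ _ (by positivity), mul_one,
    ← div_eq_inv_mul, div_div, Real.mul_self_sqrt ha]

theorem abs_log_one_add_div_sub_le {a x y : ℝ} (ha : 0 < a) (hx : 0 ≤ x) (hxy : x ≤ y)
    (hyx : y ≤ x + 1) : |Real.log (1 + y / a) - Real.log (1 + x / a)| ≤ a⁻¹ := by
  have hxa : 0 < 1 + x / a := by positivity
  have hy : 0 ≤ y := hx.trans hxy
  rw [← Real.log_div (by positivity) hxa.ne', abs_of_nonneg (Real.log_nonneg ?_)]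
  · refine (Real.log_le_sub_one_of_pos (by positivity)).trans ?_
    rw [div_sub_one hxa.ne', div_le_iff₀ hxa]
    field_simp
    nlinarith
  · rw [one_le_div hxa]; gcongr

theorem Int.mem_Icc_neg_iff_natAbs_le {y : ℤ} {t : ℕ} :
    y ∈ Icc (-(t : ℤ)) t ↔ y.natAbs ≤ t := by
  rw [mem_Icc]; omega

theorem card_filter_natAbs_sq_le {s m : ℕ} (hm : m.sqrt ≤ s) :
    #{y ∈ Icc (-(s : ℤ)) s | y.natAbs ^ 2 ≤ m} = 2 * m.sqrt + 1 := by
  have : {y ∈ Icc (-(s : ℤ)) s | y.natAbs ^ 2 ≤ m} = Icc (-(m.sqrt : ℤ)) m.sqrt := by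
    ext y
    simp only [mem_filter, Int.mem_Icc_neg_iff_natAbs_le, ← Nat.le_sqrt', and_iff_right_iff_imp]
    exact fun h => h.trans hm
  rw [this, Int.card_Icc]; omega

def latticeNormSq (n : ℤ × ℤ) : ℕ := n.1.natAbs ^ 2 + n.2.natAbs ^ 2

noncomputable def latticeDisk (K : ℕ) : Finset (ℤ × ℤ) :=
  {n ∈ Icc (-(K.sqrt : ℤ)) K.sqrt ×ˢ Icc (-(K.sqrt : ℤ)) K.sqrt | latticeNormSq n ≤ K}

theorem cast_latticeNormSq (n : ℤ × ℤ) :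
    (latticeNormSq n : ℝ) = (n.1 : ℝ) ^ 2 + (n.2 : ℝ) ^ 2 := by
  simp [latticeNormSq, Nat.cast_natAbs, sq_abs]

theorem mem_latticeDisk {K : ℕ} {n : ℤ × ℤ} : n ∈ latticeDisk K ↔ latticeNormSq n ≤ K := by
  rw [latticeDisk, mem_filter, mem_product, Int.mem_Icc_neg_iff_natAbs_le,
    Int.mem_Icc_neg_iff_natAbs_le, Nat.le_sqrt', Nat.le_sqrt', and_iff_right_iff_imp, latticeNormSq]
  omega

theorem filter_latticeDisk {k K : ℕ} (hk : k ≤ K) :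
    {n ∈ latticeDisk K | latticeNormSq n ≤ k} = latticeDisk k := by
  ext n; simp only [mem_filter, mem_latticeDisk]; omega

theorem card_latticeDisk (K : ℕ) :
    #(latticeDisk K) = ∑ j ∈ Icc (-(K.sqrt : ℤ)) K.sqrt, (2 * (K - j.natAbs ^ 2).sqrt + 1) := by
  rw [latticeDisk, card_filter, sum_product]
  refine sum_congr rfl fun j hjs => ?_
  have hj : j.natAbs ^ 2 ≤ K := Nat.le_sqrt'.mp (Int.mem_Icc_neg_iff_natAbs_le.mp hjs)
  rw [← card_filter_natAbs_sq_le (Nat.sqrt_le_sqrt (Nat.sub_le K _)), card_filter]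
  refine sum_congr rfl fun y _ => ?_
  simp only [latticeNormSq]
  congr 1
  exact propext (Nat.le_sub_iff_add_le' hj).symm

theorem abs_card_latticeDisk_sub_sum_le (K : ℕ) :
    |(#(latticeDisk K) : ℝ) - ∑ j ∈ Icc (-(K.sqrt : ℤ)) K.sqrt, 2 * √(K - (j : ℝ) ^ 2)| ≤
      2 * K.sqrt + 1 := by
  rw [card_latticeDisk, Nat.cast_sum, ← sum_sub_distrib]
  refine (abs_sum_le_sum_abs _ _).trans ((sum_le_sum fun j hjs => ?_).trans_eq
    (b := ∑ j ∈ Icc (-(K.sqrt : ℤ)) K.sqrt, 1) ?_)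
  · have hj : j.natAbs ^ 2 ≤ K := Nat.le_sqrt'.mp (Int.mem_Icc_neg_iff_natAbs_le.mp hjs)
    have hcast : ((K - j.natAbs ^ 2 : ℕ) : ℝ) = K - (j : ℝ) ^ 2 := by
      rw [Nat.cast_sub hj]; simp [Nat.cast_natAbs, sq_abs]
    have := abs_two_mul_sqrt_add_one_sub_le (K - j.natAbs ^ 2)
    rwa [hcast] at this
  · rw [sum_const, Int.card_Icc, nsmul_one]; norm_cast; omega

theorem abs_sum_two_mul_sqrt_sub_le (K : ℕ) :
    |∑ j ∈ Icc (-(K.sqrt : ℤ)) K.sqrt, 2 * √(K - (j : ℝ) ^ 2) - π * K| ≤ 2 * √K := by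
  set s := K.sqrt
  set f : ℝ → ℝ := fun x => 2 * √(K - x ^ 2) with hf
  have hKs : √K ≤ s + 1 := Real.real_sqrt_le_nat_sqrt_succ
  have hfold : ∑ j ∈ Icc (-(s : ℤ)) s, f j + f 0 = 2 * ∑ i ∈ range (s + 1), f i := by
    simpa using sum_Icc_neg_add_eq_two_nsmul_sum_range (fun j : ℤ => f j) (fun j => by simp [hf]) s
  have hint : ∫ x in (0 : ℝ)..(s + 1 : ℕ), f x = π * K / 2 := by
    have := integral_sqrt_sq_sub_sq_of_le (Real.sqrt_nonneg (K : ℝ)) (b := (s + 1 : ℕ))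
      (by push_cast; exact hKs)
    rw [Real.sq_sqrt K.cast_nonneg] at this
    rw [intervalIntegral.integral_const_mul, this]; ring
  have hanti : AntitoneOn f (Set.Icc 0 (s + 1 : ℕ)) := fun x hx y _ hxy => by
    have := Real.sqrt_le_sqrt (x := K - y ^ 2) (y := K - x ^ 2) (by nlinarith [hx.1])
    simp only [hf]; linarith
  have hcmp := hanti.sum_range_sub_integral_mem_Icc
  have hfs : f (s + 1 : ℕ) = 0 := by
    simp only [hf, mul_eq_zero, Real.sqrt_eq_zero']
    push_cast
    right; nlinarith [Real.sq_sqrt K.cast_nonneg, Real.sqrt_nonneg K]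
  have hf0 : f 0 = 2 * √K := by simp [hf]
  rw [hint, hfs, hf0] at hcmp
  rw [hf0] at hfold
  change |∑ j ∈ Icc (-(s : ℤ)) s, f j - π * K| ≤ 2 * √K
  rw [abs_le]; constructor <;> linarith [hcmp.1, hcmp.2]

theorem abs_card_latticeDisk_sub_le (K : ℕ) : |(#(latticeDisk K) : ℝ) - π * K| ≤ 4 * √K + 1 := by
  have hsK : (K.sqrt : ℝ) ≤ √K := Real.nat_sqrt_le_real_sqrt
  have := abs_sub_le (#(latticeDisk K) : ℝ)
    (∑ j ∈ Icc (-(K.sqrt : ℤ)) K.sqrt, 2 * √(K - (j : ℝ) ^ 2)) (π * K)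
  linarith [abs_card_latticeDisk_sub_sum_le K, abs_sum_two_mul_sqrt_sub_le K]

theorem sum_latticeDisk_eq (φ : ℕ → ℝ) (M : ℕ) :
    ∑ n ∈ latticeDisk M, φ (latticeNormSq n) =
      #(latticeDisk M) * φ M + ∑ k ∈ range M, #(latticeDisk k) * (φ k - φ (k + 1)) := by
  rw [sum_comp_eq_sum_card_filter_le_nsmul _ _ _ fun n hn => mem_latticeDisk.mp hn, nsmul_eq_mul]
  congr 1
  refine sum_congr rfl fun k hk => ?_
  rw [filter_latticeDisk (mem_range.mp hk).le, nsmul_eq_mul]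

theorem sum_latticeDisk_sub_pi_mul_sum_eq (φ : ℕ → ℝ) (M : ℕ) :
    ∑ n ∈ latticeDisk M, φ (latticeNormSq n) - π * ∑ k ∈ range M, φ (k + 1) =
      (#(latticeDisk M) - π * M) * φ M +
        ∑ k ∈ range M, (#(latticeDisk k) - π * k) * (φ k - φ (k + 1)) := by
  rw [sum_latticeDisk_eq, ← mul_add_sum_range_mul_sub_eq_sum_range_succ]
  simp only [sub_mul, sum_sub_distrib, mul_add, mul_sum, mul_assoc]
  ring

theorem abs_sum_range_inv_sub_log_le {a : ℝ} (ha : 0 < a) (M : ℕ) :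
    |∑ k ∈ range M, (a + (k + 1))⁻¹ - Real.log (1 + M / a)| ≤ a⁻¹ := by
  set f : ℝ → ℝ := fun x => (a + x)⁻¹ with hf
  have hanti : AntitoneOn f (Set.Icc 0 M) := fun x hx y _ hxy =>
    inv_anti₀ (by linarith [hx.1]) (by linarith)
  have hint : ∫ x in (0 : ℝ)..M, f x = Real.log (1 + M / a) := by
    rw [intervalIntegral.integral_comp_add_left (fun x => x⁻¹) a,
      integral_inv_of_pos (by linarith) (by positivity), add_zero, add_div, div_self ha.ne']
  have hcmp := hanti.sum_range_sub_integral_mem_Icc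
  have hshift := (sum_range_succ' (fun i : ℕ => f i) M).symm.trans (sum_range_succ _ M)
  have hfM : 0 ≤ f M := by positivity
  simp only [hf, Nat.cast_add, Nat.cast_one, Nat.cast_zero, add_zero] at hcmp hshift hfM
  rw [hint] at hcmp
  rw [abs_le]; constructor <;> linarith [hcmp.1, hcmp.2]

theorem sum_sqrt_mul_inv_sub_inv_le_two_div_sqrt {a : ℝ} (ha : 0 < a) (M : ℕ) :
    ∑ k ∈ range M, √k * ((a + k)⁻¹ - (a + (k + 1))⁻¹) ≤ 2 / √a := by
  have hterm : ∀ k ∈ range M, √k * ((a + k)⁻¹ - (a + (k + 1))⁻¹)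
      ≤ 2 * ((√(a + k))⁻¹ - (√(a + (k + 1 : ℕ)))⁻¹) := by
    intro k _
    have hk : (0 : ℝ) ≤ k := k.cast_nonneg
    have hdiff : 0 ≤ (a + k)⁻¹ - (a + (k + 1))⁻¹ :=
      sub_nonneg.mpr (inv_anti₀ (by positivity) (by linarith))
    calc √k * ((a + k)⁻¹ - (a + (k + 1))⁻¹)
      _ ≤ √(a + k) * ((a + k)⁻¹ - (a + (k + 1))⁻¹) := by gcongr; linarith
      _ ≤ _ := by
        push_cast
        simpa only [add_assoc] using sqrt_mul_inv_sub_inv_add_one_le (x := a + k) (by positivity)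
  calc _ ≤ ∑ k ∈ range M, 2 * ((√(a + k))⁻¹ - (√(a + (k + 1 : ℕ)))⁻¹) := sum_le_sum hterm
    _ = 2 * ((√a)⁻¹ - (√(a + M))⁻¹) := by
      rw [← mul_sum, sum_range_sub' (fun k : ℕ => (√(a + k))⁻¹), Nat.cast_zero, add_zero]
    _ ≤ 2 / √a := by
      rw [div_eq_mul_inv]; gcongr; exact sub_le_self _ (by positivity)

theorem sum_sqrt_mul_inv_sub_inv_le_sqrt_div {a : ℝ} (ha : 0 < a) (M : ℕ) :
    ∑ k ∈ range M, √k * ((a + k)⁻¹ - (a + (k + 1))⁻¹) ≤ √M / a := by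
  calc _ ≤ ∑ k ∈ range M, √M * ((a + k)⁻¹ - (a + (k + 1 : ℕ))⁻¹) := by
        refine sum_le_sum fun k hkM => ?_
        have hk : (0 : ℝ) ≤ k := k.cast_nonneg
        push_cast
        gcongr
        · exact sub_nonneg.mpr (inv_anti₀ (by positivity) (by linarith))
        · exact_mod_cast (mem_range.mp hkM).le
    _ = √M * (a⁻¹ - (a + M)⁻¹) := by
      rw [← mul_sum, sum_range_sub' (fun k : ℕ => (a + k)⁻¹), Nat.cast_zero, add_zero]
    _ ≤ √M / a := by
      rw [div_eq_mul_inv]; gcongr; exact sub_le_self _ (by positivity)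

theorem abs_sum_latticeDisk_inv_sub_pi_mul_sum_le {a : ℝ} (ha : 0 < a) (M : ℕ) :
    |∑ n ∈ latticeDisk M, (a + latticeNormSq n)⁻¹ - π * ∑ k ∈ range M, (a + (k + 1))⁻¹| ≤
      4 * (√M / (a + M) + ∑ k ∈ range M, √k * ((a + k)⁻¹ - (a + (k + 1))⁻¹)) + a⁻¹ := by
  set Δ : ℕ → ℝ := fun k => (a + k)⁻¹ - (a + (k + 1))⁻¹
  have hΔ0 : ∀ k : ℕ, 0 ≤ Δ k := fun k =>
    sub_nonneg.mpr (inv_anti₀ (by positivity) (by linarith))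
  have hΔsum : ∑ k ∈ range M, Δ k = a⁻¹ - (a + M)⁻¹ := by
    have := sum_range_sub' (fun k : ℕ => (a + k)⁻¹) M
    push_cast at this
    rwa [add_zero] at this
  have key := sum_latticeDisk_sub_pi_mul_sum_eq (fun k => (a + k)⁻¹) M
  push_cast at key
  rw [key]
  have hM : |(#(latticeDisk M) - π * M) * (a + M)⁻¹| ≤ (4 * √M + 1) * (a + M)⁻¹ := by
    have : 0 < (a + M)⁻¹ := by positivity
    rw [abs_mul, abs_of_pos this]
    exact mul_le_mul_of_nonneg_right (abs_card_latticeDisk_sub_le M) this.le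
  have hk : |∑ k ∈ range M, (#(latticeDisk k) - π * k) * Δ k| ≤
      ∑ k ∈ range M, (4 * √k + 1) * Δ k := by
    refine (abs_sum_le_sum_abs _ _).trans (sum_le_sum fun k _ => ?_)
    rw [abs_mul, abs_of_nonneg (hΔ0 k)]
    exact mul_le_mul_of_nonneg_right (abs_card_latticeDisk_sub_le k) (hΔ0 k)
  simp only [add_mul, sum_add_distrib, one_mul, hΔsum, mul_assoc, ← mul_sum] at hk
  refine (abs_add_le _ _).trans ?_
  rw [div_eq_mul_inv]
  linarith

theorem sum_sqrt_mul_inv_sub_inv_le_two_mul_min {a R : ℝ} (ha : 0 < a) {M : ℕ} (hMR : √M ≤ R) :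
    ∑ k ∈ range M, √k * ((a + k)⁻¹ - (a + (k + 1))⁻¹) ≤ 2 * min (√a)⁻¹ (R / a) := by
  rw [mul_min_of_nonneg _ _ zero_le_two]
  refine le_min ?_ ?_
  · simpa only [div_eq_mul_inv] using sum_sqrt_mul_inv_sub_inv_le_two_div_sqrt ha M
  · calc _ ≤ √M / a := sum_sqrt_mul_inv_sub_inv_le_sqrt_div ha M
      _ ≤ R / a := by gcongr
      _ ≤ 2 * (R / a) := le_mul_of_one_le_left
          (div_nonneg ((Real.sqrt_nonneg _).trans hMR) ha.le) one_le_two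

theorem abs_sum_latticeDisk_inv_sub_pi_mul_log_le {a : ℝ} (ha : 0 < a) (M : ℕ) :
    |∑ n ∈ latticeDisk M, (a + latticeNormSq n)⁻¹ - π * Real.log (1 + M / a)| ≤
      4 * (√M / (a + M) + ∑ k ∈ range M, √k * ((a + k)⁻¹ - (a + (k + 1))⁻¹)) + 5 * a⁻¹ := by
  set S := ∑ n ∈ latticeDisk M, (a + latticeNormSq n)⁻¹
  set H := ∑ k ∈ range M, (a + (k + 1))⁻¹
  have hharm : π * |H - Real.log (1 + M / a)| ≤ 4 * a⁻¹ :=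
    mul_le_mul Real.pi_le_four (abs_sum_range_inv_sub_log_le ha M) (abs_nonneg _) (by norm_num)
  calc |S - π * Real.log (1 + M / a)|
    _ = |(S - π * H) + π * (H - Real.log (1 + M / a))| := by ring_nf
    _ ≤ |S - π * H| + π * |H - Real.log (1 + M / a)| :=
      (abs_add_le _ _).trans_eq (by rw [abs_mul, abs_of_pos Real.pi_pos])
    _ ≤ _ := by linarith [abs_sum_latticeDisk_inv_sub_pi_mul_sum_le ha M]

theorem sqrt_le_iff_mem_latticeDisk {R : ℝ} (hR : 0 ≤ R) (n : ℤ × ℤ) :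
    √((n.1 : ℝ) ^ 2 + (n.2 : ℝ) ^ 2) ≤ R ↔ n ∈ latticeDisk ⌊R ^ 2⌋₊ := by
  rw [← cast_latticeNormSq, Real.sqrt_le_left hR, ← Nat.le_floor_iff (sq_nonneg R),
    mem_latticeDisk]

theorem tsum_ite_sqrt_le_eq_sum_latticeDisk {R : ℝ} (hR : 0 ≤ R) (g : ℝ → ℝ) :
    ∑' n : ℤ × ℤ, (if √((n.1 : ℝ) ^ 2 + (n.2 : ℝ) ^ 2) ≤ R
        then g ((n.1 : ℝ) ^ 2 + (n.2 : ℝ) ^ 2) else 0) =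
      ∑ n ∈ latticeDisk ⌊R ^ 2⌋₊, g (latticeNormSq n) := by
  simp_rw [sqrt_le_iff_mem_latticeDisk hR, ← cast_latticeNormSq]
  rw [tsum_eq_sum (s := latticeDisk _) fun n hn => if_neg hn]
  exact sum_congr rfl fun n hn => if_pos hn

/-- Lemma 2.2 / `LEM:HRW`: there is a constant `C > 0` such that
for all reals `a, R ≥ 1`,
`|∑_{n ∈ ℤ², |n| ≤ R} 1/(a + |n|²) − π log(1 + R²/a)| ≤ (C/√a) · min(1, R/√a)`. -/
theorem lattice_sum_log_asymptotics :
    ∃ C : ℝ, 0 < C ∧ ∀ a R : ℝ, 1 ≤ a → 1 ≤ R →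
      |(∑' n : ℤ × ℤ,
            if Real.sqrt ((n.1 : ℝ) ^ 2 + (n.2 : ℝ) ^ 2) ≤ R
            then (a + ((n.1 : ℝ) ^ 2 + (n.2 : ℝ) ^ 2))⁻¹ else 0)
          - π * Real.log (1 + R ^ 2 / a)|
        ≤ C / Real.sqrt a * min 1 (R / Real.sqrt a) := by
  refine ⟨21, by norm_num, fun a R ha hR => ?_⟩
  have ha0 : 0 < a := by linarith
  rw [tsum_ite_sqrt_le_eq_sum_latticeDisk (by linarith) fun x => (a + x)⁻¹,
    div_sqrt_mul_min_one_div_sqrt ha0.le]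
  set M := ⌊R ^ 2⌋₊
  have hMR : (M : ℝ) ≤ R ^ 2 := Nat.floor_le (sq_nonneg R)
  have hsqrtM : √M ≤ R := (Real.sqrt_le_left (by linarith)).mpr hMR
  have hinv := inv_le_min_inv_sqrt_div ha hR
  have hfloor := abs_log_one_add_div_sub_le ha0 M.cast_nonneg hMR (Nat.lt_floor_add_one _).le
  set S := ∑ n ∈ latticeDisk M, (a + latticeNormSq n)⁻¹
  set B := min (√a)⁻¹ (R / a)
  calc |S - π * Real.log (1 + R ^ 2 / a)|
    _ = |(S - π * Real.log (1 + M / a))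
          - π * (Real.log (1 + R ^ 2 / a) - Real.log (1 + M / a))| := by ring_nf
    _ ≤ |S - π * Real.log (1 + M / a)|
          + π * |Real.log (1 + R ^ 2 / a) - Real.log (1 + M / a)| :=
      (abs_sub _ _).trans_eq (by rw [abs_mul, abs_of_pos Real.pi_pos])
    _ ≤ (4 * (B + 2 * B) + 5 * B) + 4 * B := by
      gcongr
      · refine (abs_sum_latticeDisk_inv_sub_pi_mul_log_le ha0 M).trans ?_
        gcongr
        · exact sqrt_div_add_le_min ha0 M.cast_nonneg hsqrtM
        · exact sum_sqrt_mul_inv_sub_inv_le_two_mul_min ha0 hsqrtM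
      · exact Real.pi_le_four
      · exact hfloor.trans hinv
    _ = 21 * B := by ring
end

section
/- There exists a constant C > 0 such that for every N ∈ ℕ and every x ∈ T²: |P_N²G(x) − P_N²G(0)| ≤ C·N·|x|. -/
open scoped Real
open Filter Topology

/-- Euclidean norm on `ℝ²`. -/
noncomputable def enorm2 (x : ℝ × ℝ) : ℝ := Real.sqrt (x.1 ^ 2 + x.2 ^ 2)

/-- The quotient (torus) norm on `T² = (ℝ/2πℤ)²`: distance from (the class of) `x` to `0`. -/
noncomputable def torusNorm2 (x : ℝ × ℝ) : ℝ :=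
  ⨅ m : ℤ × ℤ, enorm2 (x.1 - 2 * π * (m.1 : ℝ), x.2 - 2 * π * (m.2 : ℝ))

/-- The truncated Green's function
`P_N²G(x) = (1/(4π²)) ∑_{n∈ℤ²} χ(n/N)² ⟨n⟩^{-2} e^{i n·x}` (a real-valued finite sum,
written via `cos`), where `⟨n⟩² = 1 + |n|²`. -/
noncomputable def PNG (χ : ℝ × ℝ → ℝ) (N : ℕ) (x : ℝ × ℝ) : ℝ :=
  (1 / (4 * π ^ 2)) *
    ∑' n : ℤ × ℤ,
      χ ((n.1 : ℝ) / N, (n.2 : ℝ) / N) ^ 2 * (1 + (n.1 : ℝ) ^ 2 + (n.2 : ℝ) ^ 2)⁻¹ *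
        Real.cos ((n.1 : ℝ) * x.1 + (n.2 : ℝ) * x.2)

lemma abs_cos_sub_one_le (θ : ℝ) : |Real.cos θ - 1| ≤ |θ| := by
  have h : Real.cos θ - Real.cos 0 = -2 * Real.sin ((θ + 0)/2) * Real.sin ((θ - 0)/2) :=
    Real.cos_sub_cos θ 0
  simp only [Real.cos_zero, add_zero, sub_zero] at h
  rw [h]
  have h1 : |Real.sin (θ/2)| ≤ 1 := Real.abs_sin_le_one _
  have h2 : |Real.sin (θ/2)| ≤ |θ/2| := Real.abs_sin_le_abs
  calc |(-2) * Real.sin (θ/2) * Real.sin (θ/2)| = 2 * (|Real.sin (θ/2)| * |Real.sin (θ/2)|) := by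
        rw [abs_mul, abs_mul]; simp [mul_assoc]
    _ ≤ 2 * (1 * |θ/2|) := by
        apply mul_le_mul_of_nonneg_left (mul_le_mul h1 h2 (abs_nonneg _) zero_le_one) (by norm_num)
    _ = |θ| := by rw [one_mul, abs_div]; simp; ring

noncomputable def wfun (n : ℤ × ℤ) : ℝ :=
  (|(n.1 : ℝ)| + |(n.2 : ℝ)|) / (1 + (n.1 : ℝ) ^ 2 + (n.2 : ℝ) ^ 2)

noncomputable def box (N : ℕ) : Finset (ℤ × ℤ) := Finset.Icc (-(N : ℤ), -(N : ℤ)) ((N : ℤ), (N : ℤ))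

lemma mem_box {N : ℕ} {n : ℤ × ℤ} :
    n ∈ box N ↔ (-(N:ℤ) ≤ n.1 ∧ n.1 ≤ N) ∧ (-(N:ℤ) ≤ n.2 ∧ n.2 ≤ N) := by
  simp [box, Finset.mem_Icc, Prod.le_def]
  tauto

lemma card_box (N : ℕ) : (box N).card = (2 * N + 1) ^ 2 := by
  rw [box, Finset.card_Icc_prod]
  simp [Int.card_Icc]
  rw [show ((N:ℤ) + 1 + N).toNat = 2 * N + 1 by omega]
  ring

lemma box_mono {M N : ℕ} (h : M ≤ N) : box M ⊆ box N := by
  intro n hn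
  rw [mem_box] at hn ⊢
  have : (M : ℤ) ≤ N := by exact_mod_cast h
  omega

lemma sum_wfun_le (N : ℕ) : ∑ n ∈ box N, wfun n ≤ 16 * N := by
  induction N with
  | zero =>
    have : box 0 = {((0:ℤ),(0:ℤ))} := by
      ext n; rw [mem_box]; simp [Prod.ext_iff]; omega
    simp [this, wfun]
  | succ N ih =>
    have hsub : box N ⊆ box (N + 1) := box_mono (Nat.le_succ N)
    rw [← Finset.sum_sdiff hsub]
    have hcard : (box (N+1) \ box N).card = 8 * N + 8 := by
      rw [Finset.card_sdiff_of_subset hsub, card_box, card_box]; ring_nf; omega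
    have hterm : ∀ n ∈ box (N+1) \ box N, wfun n ≤ 2 / (N + 1) := by
      intro n hn
      rw [Finset.mem_sdiff, mem_box, mem_box] at hn
      obtain ⟨⟨h1, h2⟩, h3⟩ := hn
      push_neg at h3
      push_cast at h1 h2 h3 ⊢
      set a := n.1; set b := n.2
      have hmax : a ^ 2 + b ^ 2 ≥ ((N:ℤ) + 1) ^ 2 := by
        have ha2 : a ^ 2 ≥ 0 := sq_nonneg a
        have hb2 : b ^ 2 ≥ 0 := sq_nonneg b
        rcases (by omega : a = (N:ℤ)+1 ∨ a = -((N:ℤ)+1) ∨ b = (N:ℤ)+1 ∨ b = -((N:ℤ)+1)) with h|h|h|h <;>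
          · rw [h]; nlinarith
      have hnum : |(a : ℝ)| + |(b : ℝ)| ≤ 2 * ((N:ℝ) + 1) := by
        have := abs_le.2 ⟨h1.1, h1.2⟩
        have := abs_le.2 ⟨h2.1, h2.2⟩
        have ca : |(a:ℝ)| ≤ (N:ℝ) + 1 := by exact_mod_cast (by omega : |a| ≤ (N:ℤ)+1)
        have cb : |(b:ℝ)| ≤ (N:ℝ) + 1 := by exact_mod_cast (by omega : |b| ≤ (N:ℤ)+1)
        linarith
      have hden : ((N:ℝ) + 1) ^ 2 ≤ 1 + (a:ℝ) ^ 2 + (b:ℝ) ^ 2 := by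
        have h' : (((N:ℤ)+1)^2 : ℝ) ≤ ((a^2 + b^2 : ℤ) : ℝ) := by exact_mod_cast hmax
        push_cast at h'
        linarith
      calc wfun n ≤ (2 * ((N:ℝ)+1)) / ((N:ℝ)+1)^2 := by
            apply div_le_div₀ (by positivity) hnum (by positivity) hden
        _ = 2 / ((N:ℝ)+1) := by field_simp
    have hsdiff : ∑ n ∈ box (N+1) \ box N, wfun n ≤ (8 * N + 8) * (2 / (N + 1)) := by
      calc ∑ n ∈ box (N+1) \ box N, wfun n ≤ (box (N+1) \ box N).card * (2 / ((N:ℝ) + 1)) := by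
            simpa using Finset.sum_le_card_nsmul _ _ _ hterm
        _ = (8 * N + 8) * (2 / ((N:ℝ)+1)) := by rw [hcard]; push_cast; ring
    have hx : ((8:ℝ) * N + 8) * (2 / (N + 1)) = 16 := by
      have : ((N:ℝ) + 1) ≠ 0 := by positivity
      field_simp
      ring
    push_cast
    linarith [ih]

lemma abs_fst_le_enorm2 (x : ℝ × ℝ) : |x.1| ≤ enorm2 x := by
  rw [enorm2, ← Real.sqrt_sq_eq_abs]
  exact Real.sqrt_le_sqrt (by nlinarith [sq_nonneg x.2])

lemma abs_snd_le_enorm2 (x : ℝ × ℝ) : |x.2| ≤ enorm2 x := by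
  rw [enorm2, ← Real.sqrt_sq_eq_abs]
  exact Real.sqrt_le_sqrt (by nlinarith [sq_nonneg x.1])

lemma PNG_eq_sum (χ : ℝ × ℝ → ℝ) (hχsupp : ∀ ξ, 1 < enorm2 ξ → χ ξ = 0)
    (N : ℕ) (hN : 1 ≤ N) (x : ℝ × ℝ) :
    PNG χ N x = (1 / (4 * π ^ 2)) *
      ∑ n ∈ box N,
        χ ((n.1 : ℝ) / N, (n.2 : ℝ) / N) ^ 2 * (1 + (n.1 : ℝ) ^ 2 + (n.2 : ℝ) ^ 2)⁻¹ *
          Real.cos ((n.1 : ℝ) * x.1 + (n.2 : ℝ) * x.2) := by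
  rw [PNG]
  congr 1
  apply tsum_eq_sum
  intro n hn
  rw [mem_box] at hn
  have hχ0 : χ ((n.1 : ℝ) / N, (n.2 : ℝ) / N) = 0 := by
    apply hχsupp
    have hNpos : (0:ℝ) < N := by exact_mod_cast hN
    have key : ∃ c : ℤ, (c = n.1 ∨ c = n.2) ∧ (N:ℤ) < |c| := by
      rcases (by omega : (N:ℤ) < n.1 ∨ n.1 < -(N:ℤ) ∨ (N:ℤ) < n.2 ∨ n.2 < -(N:ℤ)) with h|h|h|h
      · exact ⟨n.1, Or.inl rfl, lt_of_lt_of_le h (le_abs_self _)⟩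
      · exact ⟨n.1, Or.inl rfl, lt_of_lt_of_le (by linarith) (neg_le_abs _)⟩
      · exact ⟨n.2, Or.inr rfl, lt_of_lt_of_le h (le_abs_self _)⟩
      · exact ⟨n.2, Or.inr rfl, lt_of_lt_of_le (by linarith) (neg_le_abs _)⟩
    obtain ⟨c, hc, hcN⟩ := key
    have habs : (N:ℝ) < |(c:ℝ)| := by exact_mod_cast hcN
    have hle : |(c:ℝ)| / N ≤ enorm2 ((n.1 : ℝ) / N, (n.2 : ℝ) / N) := by
      rcases hc with h | h <;> subst h
      · simpa [abs_div, abs_of_pos hNpos] using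
          abs_fst_le_enorm2 ((n.1 : ℝ) / N, (n.2 : ℝ) / N)
      · simpa [abs_div, abs_of_pos hNpos] using
          abs_snd_le_enorm2 ((n.1 : ℝ) / N, (n.2 : ℝ) / N)
    have : (1:ℝ) < |(c:ℝ)| / N := (one_lt_div hNpos).2 habs
    linarith
  simp [hχ0]

lemma PNG_periodic (χ : ℝ × ℝ → ℝ) (N : ℕ) (x : ℝ × ℝ) (m : ℤ × ℤ) :
    PNG χ N (x.1 - 2 * π * (m.1 : ℝ), x.2 - 2 * π * (m.2 : ℝ)) = PNG χ N x := by
  rw [PNG, PNG]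
  congr 1
  apply tsum_congr
  intro n
  congr 1
  have : (n.1 : ℝ) * (x.1 - 2 * π * (m.1 : ℝ)) + (n.2 : ℝ) * (x.2 - 2 * π * (m.2 : ℝ))
      = ((n.1 : ℝ) * x.1 + (n.2 : ℝ) * x.2) - ((n.1 * m.1 + n.2 * m.2 : ℤ) : ℝ) * (2 * π) := by
    push_cast; ring
  rw [this, Real.cos_sub_int_mul_two_pi]

/-- bound (2.8): there is a constant `C > 0` such that for every `N ∈ ℕ`
(`N ≥ 1`) and every `x ∈ T²`: `|P_N²G(x) - P_N²G(0)| ≤ C · N · |x|`, where `|x|` is the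
quotient distance from `x` to `0`. -/
theorem truncated_green_lipschitz_bound
    (χ : ℝ × ℝ → ℝ) (hχsmooth : ContDiff ℝ (⊤ : ℕ∞) χ) (hχnonneg : ∀ ξ, 0 ≤ χ ξ)
    (hχsupp : ∀ ξ, 1 < enorm2 ξ → χ ξ = 0)
    (hχone : ∀ ξ, enorm2 ξ ≤ 1 / 2 → χ ξ = 1) :
    ∃ C : ℝ, 0 < C ∧ ∀ N : ℕ, 1 ≤ N → ∀ x : ℝ × ℝ,
      |PNG χ N x - PNG χ N (0, 0)| ≤ C * N * torusNorm2 x := by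
  -- a uniform bound on `χ`
  have hK : IsCompact (Set.Icc ((-1 : ℝ), (-1 : ℝ)) ((1 : ℝ), (1 : ℝ))) := isCompact_Icc
  obtain ⟨z, hz, hzmax⟩ := hK.exists_isMaxOn
    ⟨((0:ℝ),(0:ℝ)), by constructor <;> constructor <;> norm_num⟩
    hχsmooth.continuous.continuousOn
  set M : ℝ := max (χ z) 1 with hM
  have hM1 : (1:ℝ) ≤ M := le_max_right _ _
  have hMbound : ∀ ξ, χ ξ ≤ M := by
    intro ξ
    by_cases hξ : ξ ∈ Set.Icc ((-1 : ℝ), (-1 : ℝ)) ((1 : ℝ), (1 : ℝ))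
    · exact le_trans (hzmax hξ) (le_max_left _ _)
    · have hz0 : χ ξ = 0 := by
        apply hχsupp
        simp only [Set.mem_Icc, Prod.le_def] at hξ
        have habs : 1 < |ξ.1| ∨ 1 < |ξ.2| := by
          by_contra hc
          push_neg at hc
          obtain ⟨c1, c2⟩ := hc
          rw [abs_le] at c1 c2
          exact hξ ⟨⟨c1.1, c2.1⟩, ⟨c1.2, c2.2⟩⟩
        rcases habs with h | h
        · exact lt_of_lt_of_le h (abs_fst_le_enorm2 ξ)
        · exact lt_of_lt_of_le h (abs_snd_le_enorm2 ξ)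
      rw [hz0]; linarith
  have hπ : (0:ℝ) < π := Real.pi_pos
  have hπ0 : (π:ℝ) ≠ 0 := ne_of_gt hπ
  set C : ℝ := 4 * M ^ 2 / π ^ 2 with hC
  have hCpos : 0 < C := by positivity
  refine ⟨C, hCpos, ?_⟩
  intro N hN x
  -- core estimate
  have core : ∀ y : ℝ × ℝ, |PNG χ N y - PNG χ N ((0:ℝ), (0:ℝ))| ≤ C * N * enorm2 y := by
    intro y
    set E := enorm2 y with hE
    have hE0 : 0 ≤ E := Real.sqrt_nonneg _
    have hdiff : PNG χ N y - PNG χ N ((0:ℝ), (0:ℝ)) = (1 / (4 * π ^ 2)) *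
        ∑ n ∈ box N,
          χ ((n.1 : ℝ) / N, (n.2 : ℝ) / N) ^ 2 * (1 + (n.1 : ℝ) ^ 2 + (n.2 : ℝ) ^ 2)⁻¹ *
            (Real.cos ((n.1 : ℝ) * y.1 + (n.2 : ℝ) * y.2) - 1) := by
      rw [PNG_eq_sum χ hχsupp N hN, PNG_eq_sum χ hχsupp N hN, ← mul_sub,
        ← Finset.sum_sub_distrib]
      congr 1
      apply Finset.sum_congr rfl
      intro n _
      simp
      ring
    rw [hdiff]
    have hterm : ∀ n ∈ box N,
        |χ ((n.1 : ℝ) / N, (n.2 : ℝ) / N) ^ 2 * (1 + (n.1 : ℝ) ^ 2 + (n.2 : ℝ) ^ 2)⁻¹ *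
            (Real.cos ((n.1 : ℝ) * y.1 + (n.2 : ℝ) * y.2) - 1)| ≤ M ^ 2 * E * wfun n := by
      intro n _
      set θ := (n.1 : ℝ) * y.1 + (n.2 : ℝ) * y.2 with hθ
      have hχsq : |χ ((n.1 : ℝ) / N, (n.2 : ℝ) / N) ^ 2 * (1 + (n.1:ℝ)^2 + (n.2:ℝ)^2)⁻¹|
          ≤ M ^ 2 * (1 + (n.1:ℝ)^2 + (n.2:ℝ)^2)⁻¹ := by
        rw [abs_mul, abs_of_nonneg (by positivity : (0:ℝ) ≤ χ ((n.1 : ℝ) / N, (n.2 : ℝ) / N) ^ 2),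
          abs_of_nonneg (by positivity : (0:ℝ) ≤ (1 + (n.1:ℝ)^2 + (n.2:ℝ)^2)⁻¹)]
        apply mul_le_mul_of_nonneg_right _ (by positivity)
        have hb := hMbound ((n.1 : ℝ) / N, (n.2 : ℝ) / N)
        have hnn := hχnonneg ((n.1 : ℝ) / N, (n.2 : ℝ) / N)
        nlinarith
      have hcosb : |Real.cos θ - 1| ≤ (|(n.1:ℝ)| + |(n.2:ℝ)|) * E := by
        refine le_trans (abs_cos_sub_one_le θ) ?_
        calc |θ| ≤ |(n.1:ℝ)| * |y.1| + |(n.2:ℝ)| * |y.2| := by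
              rw [hθ]; refine le_trans (abs_add_le _ _) ?_; rw [abs_mul, abs_mul]
          _ ≤ |(n.1:ℝ)| * E + |(n.2:ℝ)| * E := by
              gcongr
              · exact abs_fst_le_enorm2 y
              · exact abs_snd_le_enorm2 y
          _ = (|(n.1:ℝ)| + |(n.2:ℝ)|) * E := by ring
      rw [abs_mul]
      calc |χ ((n.1 : ℝ) / N, (n.2 : ℝ) / N) ^ 2 * (1 + (n.1:ℝ)^2 + (n.2:ℝ)^2)⁻¹| *
            |Real.cos θ - 1|
          ≤ (M ^ 2 * (1 + (n.1:ℝ)^2 + (n.2:ℝ)^2)⁻¹) * ((|(n.1:ℝ)| + |(n.2:ℝ)|) * E) :=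
            mul_le_mul hχsq hcosb (abs_nonneg _) (by positivity)
        _ = M ^ 2 * E * wfun n := by rw [wfun, div_eq_mul_inv]; ring
    have hsum : |∑ n ∈ box N,
        χ ((n.1 : ℝ) / N, (n.2 : ℝ) / N) ^ 2 * (1 + (n.1 : ℝ) ^ 2 + (n.2 : ℝ) ^ 2)⁻¹ *
          (Real.cos ((n.1 : ℝ) * y.1 + (n.2 : ℝ) * y.2) - 1)| ≤ M ^ 2 * E * (16 * N) := by
      refine le_trans (Finset.abs_sum_le_sum_abs _ _) ?_
      refine le_trans (Finset.sum_le_sum hterm) ?_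
      rw [← Finset.mul_sum]
      exact mul_le_mul_of_nonneg_left (sum_wfun_le N) (by positivity)
    rw [abs_mul, abs_of_pos (by positivity : (0:ℝ) < 1 / (4 * π ^ 2))]
    refine le_trans (mul_le_mul_of_nonneg_left hsum (by positivity)) (le_of_eq ?_)
    rw [hC]
    field_simp
    ring
  have hCN : (0:ℝ) < C * N := by
    have h1 : (1:ℝ) ≤ N := by exact_mod_cast hN
    positivity
  have key : ∀ m : ℤ × ℤ, |PNG χ N x - PNG χ N (0, 0)| ≤
      C * N * enorm2 (x.1 - 2 * π * (m.1 : ℝ), x.2 - 2 * π * (m.2 : ℝ)) := by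
    intro m
    rw [← PNG_periodic χ N x m]
    exact core _
  have final : |PNG χ N x - PNG χ N (0, 0)| / (C * N) ≤ torusNorm2 x := by
    rw [torusNorm2]
    exact le_ciInf fun m => (div_le_iff₀' hCN).2 (key m)
  exact (div_le_iff₀' hCN).1 final
end

section
/- Let λ > 0 and p ∈ ℕ. For j ∈ {1, …, 2p} set ε_j = 1 if j is even and ε_j = −1 if j is odd, and let S_p denote the set of all permutations of {1, …, p}. Then there exists a constant C = C(p, λ) > 0 such that for every N ∈ ℕ and all points y₁, …, y_{2p} ∈ T²: ∏_{1 ≤ j < k ≤ 2p} (|y_j − y_k| + N^{−1})^{ε_j ε_k λ} ≤ C · max_{τ ∈ S_p} ∏_{j=1}^{p} (|y_{2j} − y_{2τ(j)−1}| + N^{−1})^{−λ}. -/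
open scoped Real

/-- The quotient (torus) distance on `T² = (ℝ/2πℤ)²`. -/
noncomputable def torusDist2 (x y : ℝ × ℝ) : ℝ := torusNorm2 (x.1 - y.1, x.2 - y.2)

/-- The charge `ε_j` of the point `y_j`: `+1` for even `j` and `-1` for odd `j`
(in the paper's `1`-based indexing; here `i : Fin (2p)` corresponds to `j = i + 1`). -/
noncomputable def charge {m : ℕ} (i : Fin m) : ℝ := if (i : ℕ) % 2 = 1 then 1 else -1

/-!
Write `a j = y_{2j-1}` (charge `-1`), `b j = y_{2j}` (charge `+1`) and `δ = N⁻¹`. The square of the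
left-hand side is
`∏_{j≠k} (d(a_j,a_k)+δ)^λ · ∏_{j≠k} (d(b_j,b_k)+δ)^λ · (∏_{j,k} (d(a_j,b_k)+δ)^{-λ})²`,
which is bounded by induction on `p`, in any pseudometric space. Remove the closest opposite pair
`(a_{j₀}, b_{k₀})`. By its minimality and the triangle inequality, every other `a_j` satisfies
`d(a_j,a_{j₀}) + δ ≤ 2 (d(a_j,b_{k₀}) + δ)`, and symmetrically for the `b_k`; so the interactions
of the removed pair with the other points cost at most `2^λ` per point, while its own factor
`(d(a_{j₀},b_{k₀})+δ)^{-λ}` extends the optimal matching of the remaining points.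
-/

open Finset

lemma enorm2_eq_norm (x : ℝ × ℝ) : enorm2 x = ‖WithLp.toLp 2 x‖ := by
  rw [WithLp.prod_norm_eq_of_L2]
  simp [enorm2]

lemma enorm2_nonneg (x : ℝ × ℝ) : 0 ≤ enorm2 x := Real.sqrt_nonneg _

lemma enorm2_add_le (x y : ℝ × ℝ) : enorm2 (x + y) ≤ enorm2 x + enorm2 y := by
  simpa only [enorm2_eq_norm, WithLp.toLp_add] using norm_add_le _ _

lemma enorm2_neg (x : ℝ × ℝ) : enorm2 (-x) = enorm2 x := by
  simp only [enorm2_eq_norm, WithLp.toLp_neg, norm_neg]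

lemma bddBelow_range_enorm2 {ι : Type*} (f : ι → ℝ × ℝ) :
    BddBelow (Set.range fun i => enorm2 (f i)) :=
  ⟨0, by rintro _ ⟨i, rfl⟩; exact enorm2_nonneg _⟩

lemma torusNorm2_zero : torusNorm2 0 = 0 := by
  refine le_antisymm ((ciInf_le (bddBelow_range_enorm2 _) 0).trans_eq ?_)
    (Real.iInf_nonneg fun _ => enorm2_nonneg _)
  simp [enorm2]

lemma torusNorm2_neg (x : ℝ × ℝ) : torusNorm2 (-x) = torusNorm2 x := by
  refine (Equiv.neg (ℤ × ℤ)).iInf_congr fun m => ?_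
  rw [← enorm2_neg]
  congr 1
  ext <;> simp only [Equiv.neg_apply, Prod.fst_neg, Prod.snd_neg, Int.cast_neg] <;> ring

lemma torusNorm2_add_le (x y : ℝ × ℝ) : torusNorm2 (x + y) ≤ torusNorm2 x + torusNorm2 y := by
  refine le_ciInf_add_ciInf fun m n => (ciInf_le (bddBelow_range_enorm2 _) (m + n)).trans ?_
  refine (le_of_eq ?_).trans (enorm2_add_le _ _)
  congr 1
  ext <;> simp only [Prod.fst_add, Prod.snd_add, Int.cast_add] <;> ring

lemma torusDist2_eq_torusNorm2_sub (x y : ℝ × ℝ) : torusDist2 x y = torusNorm2 (x - y) := rfl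

lemma torusDist2_self (x : ℝ × ℝ) : torusDist2 x x = 0 := by
  rw [torusDist2_eq_torusNorm2_sub, sub_self, torusNorm2_zero]

lemma torusDist2_comm (x y : ℝ × ℝ) : torusDist2 x y = torusDist2 y x := by
  rw [torusDist2_eq_torusNorm2_sub, ← neg_sub, torusNorm2_neg, torusDist2_eq_torusNorm2_sub]

lemma torusDist2_triangle (x y z : ℝ × ℝ) : torusDist2 x z ≤ torusDist2 x y + torusDist2 y z := by
  simpa only [torusDist2_eq_torusNorm2_sub, sub_add_sub_cancel] using
    torusNorm2_add_le (x - y) (y - z)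

-- Points of `ℝ²` with the quotient distance: only a pseudometric, since `x` and `x + 2πm` are
-- at distance `0`.
def TorusPoint : Type := ℝ × ℝ

noncomputable instance : PseudoMetricSpace TorusPoint where
  dist := torusDist2
  dist_self := torusDist2_self
  dist_comm := torusDist2_comm
  dist_triangle := torusDist2_triangle

section OffDiagProd

variable {ι κ M : Type*} [Fintype ι] [DecidableEq ι] [Fintype κ] [DecidableEq κ] [CommMonoid M]

def offDiagProd (f : ι → ι → M) : M := ∏ i, ∏ j, if i = j then 1 else f i j

lemma offDiagProd_comp_equiv (e : κ ≃ ι) (f : ι → ι → M) :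
    offDiagProd (fun i j => f (e i) (e j)) = offDiagProd f := by
  refine Fintype.prod_equiv e _ _ fun i => Fintype.prod_equiv e _ _ fun j => ?_
  simp only [e.apply_eq_iff_eq]

lemma offDiagProd_sum (f : ι ⊕ κ → ι ⊕ κ → M) :
    offDiagProd f = offDiagProd (fun i j => f (.inl i) (.inl j))
      * offDiagProd (fun i j => f (.inr i) (.inr j))
      * ∏ i, ∏ j, f (.inl i) (.inr j) * f (.inr j) (.inl i) := by
  simp only [offDiagProd, Fintype.prod_sum_type, Sum.inl.injEq, Sum.inr.injEq, reduceCtorEq,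
    if_false, prod_mul_distrib]
  rw [prod_comm (f := fun i j => f (.inr j) (.inl i))]
  ac_rfl

lemma offDiagProd_fin_succ_of_symm {n : ℕ} (f : Fin (n + 1) → Fin (n + 1) → M)
    (hf : ∀ i j, f i j = f j i) (i : Fin (n + 1)) :
    offDiagProd f = (∏ j, f (i.succAbove j) i) ^ 2
      * offDiagProd (fun j k => f (i.succAbove j) (i.succAbove k)) := by
  simp only [offDiagProd]
  rw [Fin.prod_univ_succAbove _ i, Fin.prod_univ_succAbove _ i]
  simp only [Fin.prod_univ_succAbove _ i, if_pos, (Fin.succAbove_ne i _).symm, Fin.succAbove_ne,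
    Fin.succAbove_right_inj, if_false, one_mul, prod_mul_distrib, hf i, sq]
  ac_rfl

lemma sq_prod_filter_lt_eq_offDiagProd [LinearOrder ι] (f : ι → ι → M)
    (hf : ∀ i j, f i j = f j i) :
    (∏ q ∈ univ.filter (fun q : ι × ι => q.1 < q.2), f q.1 q.2) ^ 2 = offDiagProd f := by
  have hsplit : ∀ q : ι × ι, (if q.1 = q.2 then 1 else f q.1 q.2)
      = (if q.1 < q.2 then f q.1 q.2 else 1) * if q.2 < q.1 then f q.2 q.1 else 1 := by
    rintro ⟨i, j⟩
    rcases lt_trichotomy i j with h | rfl | h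
    · simp [h, h.ne, h.not_gt]
    · simp
    · simp [h, h.ne', h.not_gt, hf i j]
  have hswap : (∏ q : ι × ι, if q.2 < q.1 then f q.2 q.1 else 1)
      = ∏ q : ι × ι, if q.1 < q.2 then f q.1 q.2 else 1 :=
    Fintype.prod_equiv (Equiv.prodComm ι ι) _ _ fun _ => rfl
  rw [offDiagProd, ← Fintype.prod_prod_type', Fintype.prod_congr _ _ hsplit, prod_mul_distrib,
    hswap, prod_filter, sq]

end OffDiagProd

def evenOddEquiv (p : ℕ) : Fin p ⊕ Fin p ≃ Fin (2 * p) where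
  toFun := Sum.elim (fun j => ⟨2 * j, by omega⟩) (fun j => ⟨2 * j + 1, by omega⟩)
  invFun i := if (i : ℕ) % 2 = 0 then .inl ⟨i / 2, by omega⟩ else .inr ⟨i / 2, by omega⟩
  left_inv := by rintro (j | j) <;> simp [Nat.mul_add_div]
  right_inv i := Fin.ext <| by
    dsimp only
    split_ifs <;> dsimp only [Sum.elim_inl, Sum.elim_inr] <;> omega

lemma charge_evenOddEquiv_inl {p : ℕ} (j : Fin p) : charge (evenOddEquiv p (.inl j)) = -1 := by
  simp [charge, evenOddEquiv]

lemma charge_evenOddEquiv_inr {p : ℕ} (j : Fin p) : charge (evenOddEquiv p (.inr j)) = 1 := by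
  simp [charge, evenOddEquiv, Nat.add_mod]

lemma Equiv.Perm.exists_apply_succAbove {p : ℕ} (σ : Equiv.Perm (Fin p)) (i j : Fin (p + 1)) :
    ∃ τ : Equiv.Perm (Fin (p + 1)), τ i = j ∧ ∀ k, τ (i.succAbove k) = j.succAbove (σ k) :=
  ⟨(finSuccEquiv' i).trans ((Equiv.optionCongr σ).trans (finSuccEquiv' j).symm),
    by simp [finSuccEquiv'_at], fun k => by simp [finSuccEquiv'_succAbove]⟩

section Interaction

variable {α : Type*} [PseudoMetricSpace α]

-- `(∏_{j<k} (d(y_j,y_k)+δ)^{ε_j ε_k μ})²` for the charges `-1` at the points `a j` and `+1`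
-- at the points `b j`.
noncomputable def interactionSq (μ δ : ℝ) {p : ℕ} (a b : Fin p → α) : ℝ :=
  offDiagProd (fun j k => (dist (a j) (a k) + δ) ^ μ)
    * offDiagProd (fun j k => (dist (b j) (b k) + δ) ^ μ)
    * (∏ j, ∏ k, (dist (a j) (b k) + δ) ^ (-μ)) ^ 2

variable {μ δ : ℝ}

lemma interactionSq_succ {p : ℕ} (a b : Fin (p + 1) → α) (j₀ k₀ : Fin (p + 1)) :
    interactionSq μ δ a b =
      ((dist (a j₀) (b k₀) + δ) ^ (-μ)
        * (∏ j, (dist (a (j₀.succAbove j)) (a j₀) + δ) ^ μ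
            * (dist (a (j₀.succAbove j)) (b k₀) + δ) ^ (-μ))
        * ∏ k, (dist (b (k₀.succAbove k)) (b k₀) + δ) ^ μ
            * (dist (b (k₀.succAbove k)) (a j₀) + δ) ^ (-μ)) ^ 2
      * interactionSq μ δ (fun j => a (j₀.succAbove j)) (fun k => b (k₀.succAbove k)) := by
  simp only [interactionSq]
  rw [offDiagProd_fin_succ_of_symm _ (fun j k => by rw [dist_comm]) j₀,
    offDiagProd_fin_succ_of_symm _ (fun j k => by rw [dist_comm]) k₀,
    Fin.prod_univ_succAbove _ j₀, Fin.prod_univ_succAbove _ k₀]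
  simp only [Fin.prod_univ_succAbove _ k₀, prod_mul_distrib, dist_comm (b _) (a j₀)]
  ring

lemma rpow_mul_rpow_neg_le_two_rpow (hμ : 0 ≤ μ) (hδ : 0 < δ) {x y z : α}
    (h : dist y z ≤ dist x z) : (dist x y + δ) ^ μ * (dist x z + δ) ^ (-μ) ≤ 2 ^ μ := by
  have hpos : 0 < dist x z + δ := by positivity
  have hle : dist x y + δ ≤ 2 * (dist x z + δ) := by linarith [dist_triangle_right x y z]
  rw [Real.rpow_neg hpos.le, ← div_eq_mul_inv, ← Real.div_rpow (by positivity) hpos.le]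
  exact Real.rpow_le_rpow (by positivity) ((div_le_iff₀ hpos).2 hle) hμ

lemma prod_rpow_mul_rpow_neg_le_two_rpow_pow (hμ : 0 ≤ μ) (hδ : 0 < δ) {ι : Type*} [Fintype ι]
    {x : ι → α} {y z : α} (h : ∀ i, dist y z ≤ dist (x i) z) :
    ∏ i, (dist (x i) y + δ) ^ μ * (dist (x i) z + δ) ^ (-μ) ≤ (2 ^ μ) ^ Fintype.card ι :=
  (prod_le_prod (fun _ _ => by positivity) fun i _ =>
    rpow_mul_rpow_neg_le_two_rpow hμ hδ (h i)).trans_eq (by simp)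

theorem exists_perm_interactionSq_le (hμ : 0 ≤ μ) (hδ : 0 < δ) {p : ℕ} (a b : Fin p → α) :
    ∃ τ : Equiv.Perm (Fin p), interactionSq μ δ a b
      ≤ ((2 ^ μ) ^ (2 * p.choose 2) * ∏ j, (dist (b j) (a (τ j)) + δ) ^ (-μ)) ^ 2 := by
  induction p with
  | zero => exact ⟨1, by simp [interactionSq, offDiagProd]⟩
  | succ p ih =>
    obtain ⟨⟨j₀, k₀⟩, hmin⟩ :=
      Finite.exists_min fun q : Fin (p + 1) × Fin (p + 1) => dist (a q.1) (b q.2)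
    obtain ⟨σ, hσ⟩ := ih (fun j => a (j₀.succAbove j)) (fun k => b (k₀.succAbove k))
    obtain ⟨τ, hτk₀, hτ⟩ := σ.exists_apply_succAbove k₀ j₀
    have hrow := prod_rpow_mul_rpow_neg_le_two_rpow_pow (x := fun j => a (j₀.succAbove j))
      hμ hδ fun j => hmin (j₀.succAbove j, k₀)
    have hcol := prod_rpow_mul_rpow_neg_le_two_rpow_pow (x := fun k => b (k₀.succAbove k))
      (y := b k₀) hμ hδ fun k => by simpa only [dist_comm (b _)] using hmin (j₀, k₀.succAbove k)
    rw [Fintype.card_fin] at hrow hcol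
    have hmatch : ∏ k, (dist (b k) (a (τ k)) + δ) ^ (-μ) = (dist (a j₀) (b k₀) + δ) ^ (-μ)
        * ∏ k, (dist (b (k₀.succAbove k)) (a (j₀.succAbove (σ k))) + δ) ^ (-μ) := by
      rw [Fin.prod_univ_succAbove _ k₀, hτk₀, dist_comm]
      simp only [hτ]
    refine ⟨τ, ?_⟩
    have hchoose : (p + 1).choose 2 = p + p.choose 2 := by
      rw [Nat.choose_succ_succ', Nat.choose_one_right]
    rw [interactionSq_succ a b j₀ k₀, hmatch, hchoose]
    set X := (dist (a j₀) (b k₀) + δ) ^ (-μ)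
    set M := ∏ k, (dist (b (k₀.succAbove k)) (a (j₀.succAbove (σ k))) + δ) ^ (-μ)
    set R := ∏ j, (dist (a (j₀.succAbove j)) (a j₀) + δ) ^ μ
      * (dist (a (j₀.succAbove j)) (b k₀) + δ) ^ (-μ)
    set K := ∏ k, (dist (b (k₀.succAbove k)) (b k₀) + δ) ^ μ
      * (dist (b (k₀.succAbove k)) (a j₀) + δ) ^ (-μ)
    calc (X * R * K) ^ 2 * _ ≤ (X * R * K) ^ 2 * ((2 ^ μ) ^ (2 * p.choose 2) * M) ^ 2 := by
          gcongr
      _ = (R * K * ((2 ^ μ) ^ (2 * p.choose 2) * (X * M))) ^ 2 := by ring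
      _ ≤ ((2 ^ μ) ^ p * (2 ^ μ) ^ p * ((2 ^ μ) ^ (2 * p.choose 2) * (X * M))) ^ 2 := by
          gcongr
      _ = _ := by ring

theorem prod_filter_lt_rpow_charge_le (hμ : 0 ≤ μ) (hδ : 0 < δ) {p : ℕ} (y : Fin (2 * p) → α) :
    (∏ q ∈ univ.filter (fun q : Fin (2 * p) × Fin (2 * p) => q.1 < q.2),
        (dist (y q.1) (y q.2) + δ) ^ (charge q.1 * charge q.2 * μ))
      ≤ (2 ^ μ) ^ (2 * p.choose 2) * ⨆ τ : Equiv.Perm (Fin p), ∏ j : Fin p,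
          (dist (y ⟨2 * (j : ℕ) + 1, by omega⟩) (y ⟨2 * ((τ j : Fin p) : ℕ), by omega⟩) + δ)
            ^ (-μ) := by
  set a : Fin p → α := fun j => y (evenOddEquiv p (.inl j))
  set b : Fin p → α := fun j => y (evenOddEquiv p (.inr j))
  have hsq : (∏ q ∈ univ.filter (fun q : Fin (2 * p) × Fin (2 * p) => q.1 < q.2),
      (dist (y q.1) (y q.2) + δ) ^ (charge q.1 * charge q.2 * μ)) ^ 2 = interactionSq μ δ a b := by
    rw [sq_prod_filter_lt_eq_offDiagProd
        (fun i j => (dist (y i) (y j) + δ) ^ (charge i * charge j * μ))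
        fun i j => by rw [dist_comm, mul_comm (charge i)],
      ← offDiagProd_comp_equiv (evenOddEquiv p), offDiagProd_sum]
    simp only [charge_evenOddEquiv_inl, charge_evenOddEquiv_inr, neg_one_mul, neg_neg, one_mul,
      dist_comm (y (evenOddEquiv p (.inr _))) (y (evenOddEquiv p (.inl _)))]
    simp only [← sq, prod_pow]
    rfl
  obtain ⟨τ, hτ⟩ := exists_perm_interactionSq_le hμ hδ a b
  calc _ ≤ (2 ^ μ) ^ (2 * p.choose 2) * ∏ j, (dist (b j) (a (τ j)) + δ) ^ (-μ) :=
        (sq_le_sq₀ (by positivity) (by positivity)).1 (hsq ▸ hτ)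
    _ ≤ _ := mul_le_mul_of_nonneg_left (le_ciSup (f := fun τ : Equiv.Perm (Fin p) =>
      ∏ j, (dist (b j) (a (τ j)) + δ) ^ (-μ)) (Finite.bddAbove_range _) τ) (by positivity)

end Interaction

/-- Lemma 2.6 / `LEM:prod`: for `λ > 0` and `p ∈ ℕ` there is a constant
`C = C(p, λ) > 0` such that for every `N ≥ 1` and all points `y₁, …, y_{2p} ∈ T²`:
`∏_{1 ≤ j < k ≤ 2p} (|y_j − y_k| + N⁻¹)^{ε_j ε_k λ}
   ≤ C · max_{τ ∈ S_p} ∏_{j=1}^p (|y_{2j} − y_{2τ(j)−1}| + N⁻¹)^{−λ}`. -/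
theorem charge_cancellation_product_estimate (lam : ℝ) (hlam : 0 < lam) (p : ℕ) :
    ∃ C : ℝ, 0 < C ∧ ∀ N : ℕ, 1 ≤ N → ∀ y : Fin (2 * p) → ℝ × ℝ,
      (∏ q ∈ Finset.univ.filter (fun q : Fin (2 * p) × Fin (2 * p) => q.1 < q.2),
          (torusDist2 (y q.1) (y q.2) + (N : ℝ)⁻¹) ^ (charge q.1 * charge q.2 * lam))
        ≤ C * ⨆ τ : Equiv.Perm (Fin p), ∏ j : Fin p,
            (torusDist2 (y ⟨2 * (j : ℕ) + 1, by have := j.isLt; omega⟩)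
                (y ⟨2 * ((τ j : Fin p) : ℕ), by have := (τ j).isLt; omega⟩)
              + (N : ℝ)⁻¹) ^ (-lam) := by
  refine ⟨(2 ^ lam) ^ (2 * p.choose 2), by positivity, fun N hN y => ?_⟩
  exact prod_filter_lt_rpow_charge_le (α := TorusPoint) hlam.le (inv_pos.2 (Nat.cast_pos.2 hN)) y
end

section
/- Let λ > 0, p ∈ ℕ, N ∈ ℕ, and let y₁, …, y_{2p+2} ∈ T² be points such that |y_{2p+2} − y_{2p+1}| ≤ |y_j − y_k| for every even index j and odd index k with 1 ≤ j, k ≤ 2p+2. Then ∏_{j=1}^{p} [ (|y_{2j−1} − y_{2p+1}| + N^{−1})/(|y_{2j−1} − y_{2p+2}| + N^{−1}) ]^{λ} · [ (|y_{2j} − y_{2p+2}| + N^{−1})/(|y_{2j} − y_{2p+1}| + N^{−1}) ]^{λ} ≤ 4^{pλ}. -/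
open scoped Real

/-!
Each of the `p` factors is at most `4 ^ λ`. For a point `a` of charge opposite to `y_{2p+2}`,
the triangle inequality gives `|a - y_{2p+1}| ≤ |a - y_{2p+2}| + |y_{2p+1} - y_{2p+2}|`, and the
minimality of the dipole bounds the last term by `|a - y_{2p+2}|`; so each ratio is at most `2`,
and adding `N⁻¹` to numerator and denominator keeps it so. This works in any pseudometric
space, and the torus distance is the quotient metric of `ℂ ⧸ 2π(ℤ + ℤi)`.
-/

noncomputable def torusLattice : AddSubgroup ℂ :=
  ((zmultiplesHom ℂ (2 * π)).coprod (zmultiplesHom ℂ (2 * π * Complex.I))).range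

noncomputable def torusProj (x : ℝ × ℝ) : ℂ ⧸ torusLattice := (⟨x.1, x.2⟩ : ℂ)

lemma torusNorm2_eq_norm_torusProj (x : ℝ × ℝ) : torusNorm2 x = ‖torusProj x‖ := by
  rw [torusProj, QuotientAddGroup.norm_mk, Metric.infDist_eq_iInf, torusLattice,
    AddMonoidHom.coe_range, ← Set.rangeFactorization_surjective.iInf_comp, torusNorm2]
  congr 1 with m
  rw [Set.rangeFactorization_coe, dist_eq_norm, Complex.norm_eq_sqrt_sq_add_sq, enorm2]
  simp [mul_comm]

lemma torusDist2_eq_dist (x y : ℝ × ℝ) : torusDist2 x y = dist (torusProj x) (torusProj y) := by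
  rw [dist_eq_norm, torusDist2, torusNorm2_eq_norm_torusProj]
  rfl

section Dipole

variable {X : Type*} [PseudoMetricSpace X] {lam ε : ℝ}

lemma div_dist_add_le_two {a u v : X} (hε : 0 ≤ ε) (h : dist v u ≤ dist v a) :
    (dist a u + ε) / (dist a v + ε) ≤ 2 := by
  refine div_le_of_le_mul₀ (by positivity) zero_le_two ?_
  linarith [dist_triangle a v u, dist_comm v a]

lemma dipole_factor_le {a b u v : X} (hlam : 0 ≤ lam) (hε : 0 ≤ ε)
    (ha : dist v u ≤ dist v a) (hb : dist v u ≤ dist b u) :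
    ((dist a u + ε) / (dist a v + ε)) ^ lam * ((dist b v + ε) / (dist b u + ε)) ^ lam
      ≤ 4 ^ lam := by
  have hb' : dist u v ≤ dist u b := by rwa [dist_comm u v, dist_comm u b]
  rw [← Real.mul_rpow (by positivity) (by positivity)]
  refine Real.rpow_le_rpow (by positivity) ?_ hlam
  calc _ ≤ (2 : ℝ) * 2 := mul_le_mul (div_dist_add_le_two hε ha) (div_dist_add_le_two hε hb')
          (by positivity) zero_le_two
    _ = 4 := by norm_num

theorem prod_dipole_factor_le {p : ℕ} (a b : Fin p → X) (u v : X) (hlam : 0 ≤ lam)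
    (hε : 0 ≤ ε) (ha : ∀ j, dist v u ≤ dist v (a j)) (hb : ∀ j, dist v u ≤ dist (b j) u) :
    ∏ j, ((dist (a j) u + ε) / (dist (a j) v + ε)) ^ lam *
        ((dist (b j) v + ε) / (dist (b j) u + ε)) ^ lam
      ≤ (4 : ℝ) ^ ((p : ℝ) * lam) := by
  calc _ ≤ ∏ _j : Fin p, (4 : ℝ) ^ lam :=
        Finset.prod_le_prod (fun _ _ => by positivity)
          fun j _ => dipole_factor_le hlam hε (ha j) (hb j)
    _ = (4 : ℝ) ^ ((p : ℝ) * lam) := by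
        rw [Finset.prod_const, Finset.card_univ, Fintype.card_fin, mul_comm,
          Real.rpow_mul_natCast zero_le_four]

end Dipole

/-- dipole cancellation, (2.20)–(2.22): let `λ > 0`, `p, N ∈ ℕ` with
`N ≥ 1`, and let `y₁, …, y_{2p+2} ∈ T²` (here `i : Fin (2p+2)` is the point `y_{i+1}`,
so even paper-indices correspond to `(i : ℕ) % 2 = 1`) be such that
`|y_{2p+2} − y_{2p+1}| ≤ |y_j − y_k|` for every even `j` and odd `k`. Then
`∏_{j=1}^p [(|y_{2j−1} − y_{2p+1}| + N⁻¹)/(|y_{2j−1} − y_{2p+2}| + N⁻¹)]^λ ·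
           [(|y_{2j} − y_{2p+2}| + N⁻¹)/(|y_{2j} − y_{2p+1}| + N⁻¹)]^λ ≤ 4^{pλ}`. -/
theorem dipole_cancellation_estimate (lam : ℝ) (hlam : 0 < lam) (p N : ℕ)
    (y : Fin (2 * p + 2) → ℝ × ℝ)
    (hmin : ∀ j k : Fin (2 * p + 2), (j : ℕ) % 2 = 1 → (k : ℕ) % 2 = 0 →
      torusDist2 (y ⟨2 * p + 1, by omega⟩) (y ⟨2 * p, by omega⟩) ≤ torusDist2 (y j) (y k)) :
    (∏ j : Fin p,
        ((torusDist2 (y ⟨2 * (j : ℕ), by have := j.isLt; omega⟩) (y ⟨2 * p, by omega⟩)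
            + (N : ℝ)⁻¹) /
          (torusDist2 (y ⟨2 * (j : ℕ), by have := j.isLt; omega⟩) (y ⟨2 * p + 1, by omega⟩)
            + (N : ℝ)⁻¹)) ^ lam *
        ((torusDist2 (y ⟨2 * (j : ℕ) + 1, by have := j.isLt; omega⟩) (y ⟨2 * p + 1, by omega⟩)
            + (N : ℝ)⁻¹) /
          (torusDist2 (y ⟨2 * (j : ℕ) + 1, by have := j.isLt; omega⟩) (y ⟨2 * p, by omega⟩)
            + (N : ℝ)⁻¹)) ^ lam)
      ≤ (4 : ℝ) ^ ((p : ℝ) * lam) := by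
  simp only [torusDist2_eq_dist] at hmin ⊢
  exact prod_dipole_factor_le (fun j => torusProj (y ⟨2 * j, by omega⟩))
    (fun j => torusProj (y ⟨2 * j + 1, by omega⟩)) _ _ hlam.le (by positivity)
    (fun j => hmin _ _ (by simp) (by simp))
    (fun j => hmin _ _ (by simp) (by simp))
end
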